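/- arXiv:2207.03032 — 4 statements merged into one kernel-verified Lean document; each statement's English description precedes it below -/
import Mathlib

section
/- Let (X_i)_{i≥1} be an i.i.d. sequence of E-valued random variables with common distribution μ, where E is a standard Borel space. Assume μ is discrete, i.e. there exists a countable set D ⊆ E with μ(D) = 1. For each n ≥ 1 let n(π) denote the number of distinct values among X_1, …, X_n. Then n(π)/n → 0 almost surely as n → ∞. -/
/-!
Fix a finite set `F`. A value observed among `X_0, …, X_{n-1}` either lies in `F` or is the
value of a sample outside `F`, so the number of distinct values is at most
`#F + #{i < n | X_i ∉ F}`. By the strong law of large numbers the second term divided by `n`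
tends to `μ Fᶜ` almost surely, so `limsup n(π)/n ≤ μ Fᶜ` a.s. Since `μ` is carried by a
countable set, `μ Fᶜ` can be made arbitrarily small along a sequence of finite sets.
-/

open MeasureTheory ProbabilityTheory Filter Topology Finset

theorem card_image_range_le_card_add_card_filter_notMem {E : Type*} [DecidableEq E]
    (x : ℕ → E) (F : Finset E) (n : ℕ) :
    #((range n).image x) ≤ #F + #{i ∈ range n | x i ∉ F} := by
  have hsub : (range n).image x ⊆ F ∪ {i ∈ range n | x i ∉ F}.image x := by
    intro y hy
    obtain ⟨i, hi, rfl⟩ := mem_image.1 hy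
    by_cases hiF : x i ∈ F
    · exact mem_union_left _ hiF
    · exact mem_union_right _ (mem_image_of_mem x (mem_filter.2 ⟨hi, hiF⟩))
  calc #((range n).image x) ≤ #(F ∪ {i ∈ range n | x i ∉ F}.image x) := card_le_card hsub
    _ ≤ #F + #({i ∈ range n | x i ∉ F}.image x) := card_union_le _ _
    _ ≤ #F + #{i ∈ range n | x i ∉ F} := Nat.add_le_add_left card_image_le _

theorem tendsto_nhds_zero_of_forall_le_of_tendsto {α : Type*} {l : Filter α} {u : α → ℝ}
    (hu : ∀ᶠ a in l, 0 ≤ u a) {L : ℕ → ℝ} (hL : Tendsto L atTop (𝓝 0))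
    (h : ∀ k, ∃ v : α → ℝ, Tendsto v l (𝓝 (L k)) ∧ ∀ᶠ a in l, u a ≤ v a) :
    Tendsto u l (𝓝 0) := by
  refine tendsto_order.2 ⟨fun ε hε => hu.mono fun a ha => hε.trans_le ha, fun ε hε => ?_⟩
  obtain ⟨k, hk⟩ := (hL.eventually (gt_mem_nhds hε)).exists
  obtain ⟨v, hv, huv⟩ := h k
  filter_upwards [hv.eventually (gt_mem_nhds hk), huv] with a hva hua
  exact hua.trans_lt hva

theorem MeasureTheory.Measure.exists_seq_finset_measure_compl_tendsto_zero {E : Type*}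
    [MeasurableSpace E] [MeasurableSingletonClass E] (μ : Measure E) [IsFiniteMeasure μ]
    {D : Set E} (hD : D.Countable) (hDc : μ Dᶜ = 0) :
    ∃ F : ℕ → Finset E, Tendsto (fun k => μ (↑(F k))ᶜ) atTop (𝓝 0) := by
  classical
  rcases isEmpty_or_nonempty E with hE | hE
  · exact ⟨fun _ => ∅, by simp [Set.univ_eq_empty_iff.2 hE]⟩
  obtain ⟨f, hf⟩ := Set.countable_iff_exists_subset_range.1 hD
  refine ⟨fun k => (range k).image f, ?_⟩
  have hanti : Antitone fun k => ((↑((range k).image f) : Set E)ᶜ) := fun i j hij =>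
    Set.compl_subset_compl.2 (coe_subset.2 (image_subset_image (range_subset_range.2 hij)))
  have hnull : μ (⋂ k, ((↑((range k).image f) : Set E)ᶜ)) = 0 := by
    refine measure_mono_null (fun y hy => fun hyD => ?_) hDc
    obtain ⟨i, rfl⟩ := hf hyD
    exact Set.mem_iInter.1 hy (i + 1) (mem_image_of_mem f (self_mem_range_succ i))
  have hlim := tendsto_measure_iInter_atTop
    (fun k => ((range k).image f).measurableSet.compl.nullMeasurableSet) hanti
    ⟨0, measure_ne_top μ _⟩
  rwa [hnull] at hlim

theorem ProbabilityTheory.tendsto_card_filter_mem_div_ae {Ω E : Type*} [MeasurableSpace Ω]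
    {P : Measure Ω} [IsProbabilityMeasure P] [MeasurableSpace E] {X : ℕ → Ω → E}
    (hXmeas : ∀ i, Measurable (X i)) (hindep : Pairwise fun i j => IndepFun (X i) (X j) P)
    {μ : Measure E} (hident : ∀ i, P.map (X i) = μ) {S : Set E} [DecidablePred (· ∈ S)] (hS : MeasurableSet S) :
    ∀ᵐ ω ∂P, Tendsto (fun n : ℕ => (#{i ∈ range n | X i ω ∈ S} : ℝ) / n) atTop
      (𝓝 (μ.real S)) := by
  have hmeas : Measurable (S.indicator (1 : E → ℝ)) := measurable_const.indicator hS
  have hint : Integrable (fun ω => S.indicator ((1 : E → ℝ)) (X 0 ω)) P :=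
    (integrable_const (1 : ℝ)).indicator hS |>.comp_measurable (hXmeas 0)
  have hlaw := strong_law_ae_real (fun i ω => S.indicator ((1 : E → ℝ)) (X i ω)) hint
    (fun i j hij => (hindep hij).comp hmeas hmeas)
    (fun i => (IdentDistrib.mk (hXmeas i).aemeasurable (hXmeas 0).aemeasurable
      (by rw [hident i, hident 0])).comp hmeas)
  have hmean : P[fun ω => S.indicator ((1 : E → ℝ)) (X 0 ω)] = μ.real S := by
    rw [← integral_map (hXmeas 0).aemeasurable hmeas.aestronglyMeasurable, hident 0,
      integral_indicator_one hS]
  filter_upwards [hlaw] with ω hω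
  rw [hmean] at hω
  simpa [Set.indicator_apply, sum_boole] using hω

/-- If `(X i)` is an i.i.d. sequence with common discrete distribution `μ`
(on a standard Borel space), then the number of distinct values among the
first `n` samples, divided by `n`, tends to `0` almost surely. -/
theorem stmt_0
    {Ω : Type*} [MeasurableSpace Ω] (P : Measure Ω) [IsProbabilityMeasure P]
    {E : Type*} [MeasurableSpace E] [StandardBorelSpace E]
    (X : ℕ → Ω → E) (hXmeas : ∀ i, Measurable (X i))
    (hindep : iIndepFun X P)
    (μ : Measure E) (hident : ∀ i, Measure.map (X i) P = μ)
    (D : Set E) (hDcount : D.Countable) (hD : μ D = 1) :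
    ∀ᵐ ω ∂P, Tendsto
      (fun n : ℕ => (Set.ncard ((fun i => X i ω) '' Set.Iio n) : ℝ) / n)
      atTop (nhds 0) := by
  classical
  have : IsProbabilityMeasure μ := by
    rw [← hident 0]
    exact Measure.isProbabilityMeasure_map (hXmeas 0).aemeasurable
  obtain ⟨F, hF⟩ := μ.exists_seq_finset_measure_compl_tendsto_zero hDcount
    (prob_compl_eq_zero_iff hDcount.measurableSet |>.2 hD)
  have hfreq :=
    ae_all_iff.2 fun k => tendsto_card_filter_mem_div_ae hXmeas
      (fun i j hij => hindep.indepFun hij) hident (F k).measurableSet.compl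
  filter_upwards [hfreq] with ω hω
  have hbound : ∀ k n, (((fun i => X i ω) '' Set.Iio n).ncard : ℝ) / n ≤
      #(F k) / n + #{i ∈ range n | X i ω ∉ F k} / n := fun k n => by
    rw [← add_div, ← coe_range, ← coe_image, Set.ncard_coe_finset]
    gcongr
    exact_mod_cast card_image_range_le_card_add_card_filter_notMem _ (F k) n
  refine tendsto_nhds_zero_of_forall_le_of_tendsto (.of_forall fun n => by positivity)
    ((ENNReal.tendsto_toReal ENNReal.zero_ne_top).comp hF) fun k =>
      ⟨_, ?_, .of_forall (hbound k)⟩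
  simpa [measureReal_def] using (tendsto_const_div_atTop_nhds_zero_nat (#(F k) : ℝ)).add (hω k)
end

section
/- (Laplace exponent of the generalized Dirichlet intensity.) For every positive integer γ and every λ ≥ 0, ∫_0^∞ (1 − e^{−λs}) (∑_{j=1}^{γ} e^{−js}) s^{−1} ds = ∑_{j=1}^{γ} log((λ+j)/j) = log( Γ(λ+γ+1) / (Γ(λ+1) Γ(γ+1)) ), where the integral is a Lebesgue integral over (0,∞) and Γ is the Gamma function. Consequently exp(−this exponent) = γ!/(λ+1)_γ, where (λ+1)_γ = Γ(λ+1+γ)/Γ(λ+1) is the ascending factorial. -/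
open MeasureTheory Real Set Finset


lemma exp_neg_mul_integral {t : ℝ} (ht : 0 < t) :
    ∫ s in Ioi (0:ℝ), Real.exp (-(t * s)) = 1 / t := by
  have hderiv : ∀ x ∈ Ici (0:ℝ),
      HasDerivAt (fun x => -Real.exp (-(t * x)) / t) (Real.exp (-(t * x))) x := by
    intro x _
    have h1 : HasDerivAt (fun x : ℝ => -(t * x)) (-t) x := by
      exact (by simpa using (hasDerivAt_id x).const_mul t : HasDerivAt (fun x : ℝ => t * x) t x).neg
    have h2 := (Real.hasDerivAt_exp (-(t * x))).comp x h1
    have h3 := (h2.neg).div_const t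
    exact h3.congr_deriv (by rw [mul_neg, neg_neg, mul_div_assoc, div_self (ne_of_gt ht), mul_one])
  have hint : IntegrableOn (fun x : ℝ => Real.exp (-(t * x))) (Ioi 0) := by
    simpa [neg_mul] using exp_neg_integrableOn_Ioi 0 ht
  have htend : Filter.Tendsto (fun x => -Real.exp (-(t * x)) / t) Filter.atTop (nhds 0) := by
    have h1 : Filter.Tendsto (fun x : ℝ => t * x) Filter.atTop Filter.atTop :=
      Filter.Tendsto.const_mul_atTop ht Filter.tendsto_id
    have h2 : Filter.Tendsto (fun x : ℝ => Real.exp (-(t * x))) Filter.atTop (nhds 0) :=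
      Real.tendsto_exp_neg_atTop_nhds_zero.comp h1
    simpa using (h2.neg).div_const t
  rw [integral_Ioi_of_hasDerivAt_of_tendsto' hderiv hint htend]
  simp [mul_zero]
  ring

lemma frullani_prod_integrable {a b : ℝ} (ha : 0 < a) (hab : a ≤ b) :
    Integrable (Function.uncurry fun t s => Real.exp (-(t * s)))
      ((volume.restrict (Icc a b)).prod (volume.restrict (Ioi (0:ℝ)))) := by
  have hc : Continuous (Function.uncurry fun t s : ℝ => Real.exp (-(t * s))) := by
    fun_prop
  rw [integrable_prod_iff hc.aestronglyMeasurable]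
  constructor
  · filter_upwards [ae_restrict_mem measurableSet_Icc] with t ht
    exact exp_neg_integrableOn_Ioi 0 (lt_of_lt_of_le ha ht.1) |>.congr_fun
      (fun x _ => by simp [Function.uncurry, neg_mul]) measurableSet_Ioi
  · have h1 : Integrable (fun t : ℝ => 1 / t) (volume.restrict (Icc a b)) := by
      have : ContinuousOn (fun t : ℝ => 1 / t) (Icc a b) := by
        apply ContinuousOn.div continuousOn_const continuousOn_id
        intro x hx; exact ne_of_gt (lt_of_lt_of_le ha hx.1)
      exact this.integrableOn_compact isCompact_Icc
    refine h1.congr ?_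
    filter_upwards [ae_restrict_mem measurableSet_Icc] with t ht
    simp only [Function.uncurry, Real.norm_eq_abs, abs_of_pos (Real.exp_pos _)]
    exact (exp_neg_mul_integral (lt_of_lt_of_le ha ht.1)).symm

lemma inner_t_integral {a b s : ℝ} (hab : a ≤ b) (hs : 0 < s) :
    ∫ t in Icc a b, Real.exp (-(t * s)) = (Real.exp (-(a * s)) - Real.exp (-(b * s))) / s := by
  rw [MeasureTheory.integral_Icc_eq_integral_Ioc, ← intervalIntegral.integral_of_le hab]
  have hderiv : ∀ t ∈ Set.uIcc a b,
      HasDerivAt (fun t => -Real.exp (-(t * s)) / s) (Real.exp (-(t * s))) t := by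
    intro t _
    have h1 : HasDerivAt (fun t : ℝ => -(t * s)) (-s) t := by
      exact (by simpa using (hasDerivAt_id t).mul_const s : HasDerivAt (fun t : ℝ => t * s) s t).neg
    have h2 := ((Real.hasDerivAt_exp (-(t * s))).comp t h1).neg.div_const s
    exact h2.congr_deriv (by rw [mul_neg, neg_neg, mul_div_assoc, div_self (ne_of_gt hs), mul_one])
  have hcont : IntervalIntegrable (fun t => Real.exp (-(t * s))) volume a b := by
    apply Continuous.intervalIntegrable; fun_prop
  rw [intervalIntegral.integral_eq_sub_of_hasDerivAt hderiv hcont]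
  field_simp
  ring

lemma frullani {a b : ℝ} (ha : 0 < a) (hab : a ≤ b) :
    IntegrableOn (fun s => (Real.exp (-(a * s)) - Real.exp (-(b * s))) / s) (Ioi (0:ℝ))
    ∧ ∫ s in Ioi (0:ℝ), (Real.exp (-(a * s)) - Real.exp (-(b * s))) / s = Real.log (b / a) := by
  have hprod := frullani_prod_integrable ha hab
  have hae : ∀ᵐ s ∂(volume.restrict (Ioi (0:ℝ))),
      (∫ t in Icc a b, Real.exp (-(t * s)))
        = (Real.exp (-(a * s)) - Real.exp (-(b * s))) / s := by
    filter_upwards [ae_restrict_mem measurableSet_Ioi] with s hs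
    exact inner_t_integral hab hs
  have hmarg : Integrable (fun s => ∫ t in Icc a b, Real.exp (-(t * s)))
      (volume.restrict (Ioi (0:ℝ))) := by
    have := hprod.integral_prod_right
    simpa [Function.uncurry] using this
  constructor
  · exact hmarg.congr hae
  · have hswap := MeasureTheory.integral_integral_swap hprod
    calc ∫ s in Ioi (0:ℝ), (Real.exp (-(a * s)) - Real.exp (-(b * s))) / s
        = ∫ s in Ioi (0:ℝ), ∫ t in Icc a b, Real.exp (-(t * s)) :=
          (integral_congr_ae hae).symm
      _ = ∫ t in Icc a b, ∫ s in Ioi (0:ℝ), Real.exp (-(t * s)) := hswap.symm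
      _ = ∫ t in Icc a b, 1 / t := by
          refine integral_congr_ae ?_
          filter_upwards [ae_restrict_mem measurableSet_Icc] with t ht
          exact exp_neg_mul_integral (lt_of_lt_of_le ha ht.1)
      _ = Real.log (b / a) := by
          rw [MeasureTheory.integral_Icc_eq_integral_Ioc, ← intervalIntegral.integral_of_le hab]
          simp_rw [one_div]
          exact integral_inv (by
            intro h
            rcases Set.mem_uIcc.mp h with ⟨h1, _⟩ | ⟨_, h2⟩
            · linarith
            · linarith)

lemma gamma_prod (γ : ℕ) (lam : ℝ) (hlam : 0 ≤ lam) :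
    ∏ j ∈ Finset.Icc 1 γ, (lam + j) = Real.Gamma (lam + γ + 1) / Real.Gamma (lam + 1) := by
  induction γ with
  | zero =>
    simp [div_self (ne_of_gt (Real.Gamma_pos_of_pos (by linarith : (0:ℝ) < lam + 1)))]
  | succ n ih =>
    rw [Finset.prod_Icc_succ_top (Nat.succ_le_succ (Nat.zero_le n)), ih]
    have h1 : lam + ((n:ℕ)+1 : ℕ) + 1 = (lam + n + 1) + 1 := by push_cast; ring
    have h2 : Real.Gamma ((lam + n + 1) + 1) = (lam + n + 1) * Real.Gamma (lam + n + 1) :=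
      Real.Gamma_add_one (ne_of_gt (by positivity))
    rw [h1, h2]
    push_cast
    field_simp
    ring

/-- Laplace exponent of the generalized Dirichlet intensity: for integer `γ ≥ 1`
and `λ ≥ 0`,
`∫_0^∞ (1 − e^{−λs}) (∑_{j=1}^γ e^{−js}) s^{−1} ds = ∑_{j=1}^γ log((λ+j)/j)
  = log(Γ(λ+γ+1)/(Γ(λ+1)Γ(γ+1)))`,
and `exp(−exponent) = γ!/(λ+1)_γ` with `(λ+1)_γ = Γ(λ+1+γ)/Γ(λ+1)`. -/
theorem stmt_6 (γ : ℕ) (hγ : 1 ≤ γ) (lam : ℝ) (hlam : 0 ≤ lam) :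
    ((∫ s in Ioi (0:ℝ),
        (1 - Real.exp (-(lam * s))) * (∑ j ∈ Finset.Icc 1 γ, Real.exp (-((j:ℝ) * s))) / s)
      = ∑ j ∈ Finset.Icc 1 γ, Real.log ((lam + j) / j))
    ∧ ((∑ j ∈ Finset.Icc 1 γ, Real.log ((lam + j) / j))
      = Real.log (Real.Gamma (lam + γ + 1) / (Real.Gamma (lam + 1) * Real.Gamma (γ + 1))))
    ∧ (Real.exp (-(∑ j ∈ Finset.Icc 1 γ, Real.log ((lam + j) / j)))
      = (Nat.factorial γ : ℝ) / (Real.Gamma (lam + 1 + γ) / Real.Gamma (lam + 1))) := by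
  have hjpos : ∀ j ∈ Finset.Icc 1 γ, (0:ℝ) < j := by
    intro j hj
    have := (Finset.mem_Icc.mp hj).1
    exact_mod_cast Nat.lt_of_lt_of_le Nat.zero_lt_one this
  have hfr : ∀ j ∈ Finset.Icc 1 γ,
      IntegrableOn (fun s => (Real.exp (-((j:ℝ) * s)) - Real.exp (-((lam + j) * s))) / s) (Ioi (0:ℝ))
      ∧ ∫ s in Ioi (0:ℝ), (Real.exp (-((j:ℝ) * s)) - Real.exp (-((lam + j) * s))) / s
          = Real.log ((lam + j) / j) :=
    fun j hj => frullani (hjpos j hj) (by linarith [hjpos j hj])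
  have part1 : (∫ s in Ioi (0:ℝ),
        (1 - Real.exp (-(lam * s))) * (∑ j ∈ Finset.Icc 1 γ, Real.exp (-((j:ℝ) * s))) / s)
      = ∑ j ∈ Finset.Icc 1 γ, Real.log ((lam + j) / j) := by
    have heq : ∀ᵐ s ∂(volume.restrict (Ioi (0:ℝ))),
        (1 - Real.exp (-(lam * s))) * (∑ j ∈ Finset.Icc 1 γ, Real.exp (-((j:ℝ) * s))) / s
          = ∑ j ∈ Finset.Icc 1 γ,
              (Real.exp (-((j:ℝ) * s)) - Real.exp (-((lam + j) * s))) / s := by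
      filter_upwards [ae_restrict_mem measurableSet_Ioi] with s hs
      rw [Finset.mul_sum, Finset.sum_div]
      refine Finset.sum_congr rfl fun j hj => ?_
      congr 1
      have : Real.exp (-((lam + j) * s)) = Real.exp (-(lam * s)) * Real.exp (-((j:ℝ) * s)) := by
        rw [← Real.exp_add]; ring_nf
      rw [this]; ring
    rw [integral_congr_ae heq, integral_finset_sum _ (fun j hj => (hfr j hj).1)]
    exact Finset.sum_congr rfl fun j hj => (hfr j hj).2
  have hprod := gamma_prod γ lam hlam
  have hfac : (∏ j ∈ Finset.Icc 1 γ, (j:ℝ)) = (Nat.factorial γ : ℝ) := by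
    rw [← Nat.cast_prod]
    norm_cast
    rw [← Finset.Ico_add_one_right_eq_Icc]
    exact Finset.prod_Ico_id_eq_factorial γ
  have hratio_pos : 0 < Real.Gamma (lam + γ + 1) / Real.Gamma (lam + 1) := by
    apply div_pos (Real.Gamma_pos_of_pos (by positivity)) (Real.Gamma_pos_of_pos (by linarith))
  have hP : (∏ j ∈ Finset.Icc 1 γ, ((lam + j) / j))
      = Real.Gamma (lam + γ + 1) / Real.Gamma (lam + 1) / (Nat.factorial γ : ℝ) := by
    rw [Finset.prod_div_distrib, hprod, hfac]
  have hsum : (∑ j ∈ Finset.Icc 1 γ, Real.log ((lam + j) / j))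
      = Real.log (∏ j ∈ Finset.Icc 1 γ, ((lam + j) / j)) := by
    rw [Real.log_prod]
    intro j hj
    have := hjpos j hj
    positivity
  have hPpos : 0 < ∏ j ∈ Finset.Icc 1 γ, ((lam + j) / j) := by
    rw [hP]; positivity
  refine ⟨part1, ?_, ?_⟩
  · rw [hsum, hP]
    congr 1
    rw [div_div]
    congr 2
    rw [Real.Gamma_nat_eq_factorial]
  · rw [hsum, Real.exp_neg, Real.exp_log hPpos, hP]
    rw [show lam + 1 + γ = lam + γ + 1 by ring]
    field_simp
end

section
/- Fix a > 0, θ > 0, σ ∈ (0,1) and set Φ(u) = exp(−(a/σ)(u+θ)^σ) for u > 0. For integers n ≥ 1, k ≥ 0 define D(n,k) = ∫_0^∞ u^{n−1}(u+θ)^{kσ−n} Φ(u) du and N(n,k) = ∫_0^∞ u^{n}(u+θ)^{(k+1)σ−(n+1)} Φ(u) du (finite, positive Lebesgue integrals). If (k_n) is a sequence of integers with 1 ≤ k_n ≤ n and k_n/n → 0, then (a/n) · N(n,k_n)/D(n,k_n) → 0 as n → ∞. -/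
/-!
Write `ℓ_{m,p}(u) = u^m (u+θ)^p exp(-(a/σ)(u+θ)^σ)`, so that `D = ∫ ℓ_{n-1,kσ-n}` and
`N = ∫ ℓ_{n,kσ-n+σ-1}`. Since `a (u+θ)^{σ-1} exp(-(a/σ)(u+θ)^σ)` is minus the derivative of the
exponential factor, integrating by parts against `u^n (u+θ)^{kσ-n}` and writing `u = (u+θ) - θ`
gives `a N ≤ kσ D + nθ K` with `K = ∫ ℓ_{n-1,kσ-n-1}`. Hence `(a/n) N/D ≤ σ k/n + θ K/D`, and it
remains to see that `K/D → 0` uniformly in `k`: the law with density `∝ ℓ_{n-1,kσ-n}` escapes to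
infinity. In `ℓ_{m,p}(u) = (u/(u+θ))^m (u+θ)^{p+m} exp(…)` the first factor is increasing, so on
`[0, M]` the integrand is at most `C_M ρ_M^m` times its translate by `2M`, with `ρ_M < 1`; this
gives `K ≤ (C_M ρ_M^m/θ + 1/(M+θ)) D`.
-/

open MeasureTheory Real Set Filter

/-- `D(n,k) = ∫_0^∞ u^{n−1}(u+θ)^{kσ−n} exp(−(a/σ)(u+θ)^σ) du`. -/
noncomputable def Dint (a θ σ : ℝ) (n k : ℕ) : ℝ :=
  ∫ u in Ioi (0:ℝ),
    u ^ (n - 1) * (u + θ) ^ ((k : ℝ) * σ - n) * Real.exp (-(a / σ) * (u + θ) ^ σ)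

/-- `N(n,k) = ∫_0^∞ u^{n}(u+θ)^{(k+1)σ−(n+1)} exp(−(a/σ)(u+θ)^σ) du`. -/
noncomputable def Nint (a θ σ : ℝ) (n k : ℕ) : ℝ :=
  ∫ u in Ioi (0:ℝ),
    u ^ n * (u + θ) ^ (((k : ℝ) + 1) * σ - ((n : ℝ) + 1)) * Real.exp (-(a / σ) * (u + θ) ^ σ)

open Topology

theorem tendsto_rpow_mul_exp_neg_mul_rpow_atTop (s : ℝ) {c σ : ℝ} (hc : 0 < c) (hσ : 0 < σ) :
    Tendsto (fun v : ℝ => v ^ s * exp (-c * v ^ σ)) atTop (𝓝 0) := by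
  refine ((tendsto_rpow_mul_exp_neg_mul_atTop_nhds_zero (s / σ) c hc).comp
    (tendsto_rpow_atTop hσ)).congr' ?_
  filter_upwards [eventually_gt_atTop 0] with v hv
  rw [Function.comp_apply, ← rpow_mul hv.le, mul_div_cancel₀ s hσ.ne']

theorem integrableOn_Ioi_rpow_mul_exp_neg_mul_rpow (s : ℝ) {c σ θ : ℝ} (hc : 0 < c)
    (hσ : 0 < σ) (hθ : 0 < θ) :
    IntegrableOn (fun v : ℝ => v ^ s * exp (-c * v ^ σ)) (Ioi θ) := by
  set s' := max s 0
  have hint : IntegrableOn (fun v : ℝ => θ ^ (s - s') * (v ^ s' * exp (-c * v ^ σ))) (Ioi θ) :=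
    ((integrableOn_rpow_mul_exp_neg_mul_rpow (s := s') (by linarith [le_max_right s 0]) hσ
      hc).mono_set (Ioi_subset_Ioi hθ.le)).const_mul _
  refine hint.mono' (by fun_prop : Measurable _).aestronglyMeasurable ?_
  filter_upwards [ae_restrict_mem measurableSet_Ioi] with v (hv : θ < v)
  have hv0 : 0 < v := hθ.trans hv
  rw [norm_of_nonneg (by positivity : 0 ≤ v ^ s * exp (-c * v ^ σ)), ← mul_assoc]
  have hpow : v ^ s ≤ θ ^ (s - s') * v ^ s' :=
    calc v ^ s = v ^ (s - s') * v ^ s' := by rw [← rpow_add hv0, sub_add_cancel]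
      _ ≤ θ ^ (s - s') * v ^ s' := mul_le_mul_of_nonneg_right
          (rpow_le_rpow_of_nonpos hθ hv.le (by linarith [le_max_left s 0])) (by positivity)
  gcongr

noncomputable def latentIntegrand (c θ σ : ℝ) (m : ℕ) (p u : ℝ) : ℝ :=
  u ^ m * (u + θ) ^ p * exp (-c * (u + θ) ^ σ)

/-- `Dint a θ σ n k` is definitionally `latentIntegral a θ σ (n - 1) (k * σ - n)`. -/
noncomputable def latentIntegral (a θ σ : ℝ) (m : ℕ) (p : ℝ) : ℝ :=
  ∫ u in Ioi (0 : ℝ), latentIntegrand (a / σ) θ σ m p u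

section latentIntegrand

variable {c θ σ : ℝ}

theorem latentIntegrand_nonneg (hθ : 0 ≤ θ) (m : ℕ) (p : ℝ) {u : ℝ} (hu : 0 ≤ u) :
    0 ≤ latentIntegrand c θ σ m p u := by
  unfold latentIntegrand; positivity

theorem latentIntegrand_le (hθ : 0 < θ) (m : ℕ) (p : ℝ) {u : ℝ} (hu : 0 ≤ u) :
    latentIntegrand c θ σ m p u ≤ (u + θ) ^ (m + p) * exp (-c * (u + θ) ^ σ) := by
  have huθ : 0 < u + θ := by linarith
  rw [latentIntegrand, rpow_add huθ, rpow_natCast]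
  gcongr
  linarith

theorem integrableOn_latentIntegrand (hc : 0 < c) (hσ : 0 < σ) (hθ : 0 < θ) (m : ℕ) (p : ℝ) :
    IntegrableOn (latentIntegrand c θ σ m p) (Ioi 0) := by
  have hshift : IntegrableOn (fun u : ℝ => (u + θ) ^ (m + p) * exp (-c * (u + θ) ^ σ))
      (Ioi 0) := by
    have := ((measurePreserving_add_right volume θ).integrableOn_comp_preimage
      (measurableEmbedding_addRight θ)).2
      (integrableOn_Ioi_rpow_mul_exp_neg_mul_rpow (m + p) hc hσ hθ)
    rwa [preimage_add_const_Ioi, sub_self] at this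
  refine hshift.mono' (by unfold latentIntegrand; fun_prop : Measurable _).aestronglyMeasurable ?_
  filter_upwards [ae_restrict_mem measurableSet_Ioi] with u (hu : 0 < u)
  rw [norm_of_nonneg (latentIntegrand_nonneg hθ.le m p hu.le)]
  exact latentIntegrand_le hθ m p hu.le

theorem tendsto_latentIntegrand_atTop (hc : 0 < c) (hσ : 0 < σ) (hθ : 0 < θ) (m : ℕ) (p : ℝ) :
    Tendsto (latentIntegrand c θ σ m p) atTop (𝓝 0) := by
  have hlim := (tendsto_rpow_mul_exp_neg_mul_rpow_atTop (m + p) hc hσ).comp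
    (tendsto_atTop_add_const_right atTop θ tendsto_id)
  refine squeeze_zero' ?_ ?_ hlim
  · filter_upwards [eventually_ge_atTop 0] with u hu using latentIntegrand_nonneg hθ.le m p hu
  · filter_upwards [eventually_ge_atTop 0] with u hu using latentIntegrand_le hθ m p hu

theorem hasDerivAt_latentIntegrand (m : ℕ) (p : ℝ) {u : ℝ} (hu : 0 < u + θ) :
    HasDerivAt (latentIntegrand c θ σ (m + 1) p)
      ((m + 1) * latentIntegrand c θ σ m p u + p * latentIntegrand c θ σ (m + 1) (p - 1) u
        - c * σ * latentIntegrand c θ σ (m + 1) (p + σ - 1) u) u := by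
  have hshift : HasDerivAt (fun x : ℝ => x + θ) 1 u := (hasDerivAt_id u).add_const θ
  refine (((hasDerivAt_pow (m + 1) u).mul (hshift.rpow_const (p := p) (Or.inl hu.ne'))).mul
    ((hshift.rpow_const (p := σ) (Or.inl hu.ne')).const_mul (-c)).exp).congr_deriv ?_
  simp only [latentIntegrand, Pi.mul_apply, rpow_add hu, rpow_sub_one hu.ne']
  push_cast
  field_simp
  ring

theorem continuousOn_latentIntegrand (m : ℕ) (p : ℝ) :
    ContinuousOn (latentIntegrand c θ σ m p) (Ioi (-θ)) := by
  intro u (hu : -θ < u)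
  have huθ : u + θ ≠ 0 := by linarith
  unfold latentIntegrand
  exact ContinuousAt.continuousWithinAt (by fun_prop (disch := simp [huθ]))

theorem latentIntegrand_eq_div_pow_mul (hθ : 0 < θ) (m : ℕ) (p : ℝ) {u : ℝ} (hu : 0 ≤ u) :
    latentIntegrand c θ σ m p u
      = (u / (u + θ)) ^ m * (u + θ) ^ (p + m) * exp (-c * (u + θ) ^ σ) := by
  have huθ : 0 < u + θ := by linarith
  rw [latentIntegrand, rpow_add huθ, rpow_natCast, div_pow]
  field_simp

theorem latentIntegrand_le_shift (hc : 0 ≤ c) (hσ : 0 < σ) (hθ : 0 < θ) {M : ℝ} (hM : 0 < M)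
    (m : ℕ) {p : ℝ} (hp : -1 ≤ p + m) {x : ℝ} (hx : x ∈ Icc 0 M) :
    latentIntegrand c θ σ m p x ≤ (3 * M + θ) / θ * exp (c * (3 * M + θ) ^ σ)
      * ((2 * M + θ) / (2 * (M + θ))) ^ m * latentIntegrand c θ σ m p (x + 2 * M) := by
  obtain ⟨hx0, hxM⟩ := hx
  have hxθ : 0 < x + θ := by linarith
  have hx2θ : 0 < x + 2 * M + θ := by linarith
  have hratio : x / (x + θ) ≤ (2 * M + θ) / (2 * (M + θ)) * ((x + 2 * M) / (x + 2 * M + θ)) := by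
    rw [div_mul_div_comm, div_le_div_iff₀ hxθ (by positivity)]
    have key : x * x ≤ (2 * M + θ) * (2 * M - x) :=
      mul_le_mul (by linarith) (by linarith) hx0 (by positivity)
    nlinarith [mul_le_mul_of_nonneg_left key hθ.le]
  have hbase : (x + θ) ^ (p + m) ≤ (3 * M + θ) / θ * (x + 2 * M + θ) ^ (p + m) := by
    have hmono : (x + θ) ^ (p + m + 1) ≤ (x + 2 * M + θ) ^ (p + m + 1) :=
      rpow_le_rpow hxθ.le (by linarith) (by linarith)
    rw [rpow_add_one hxθ.ne', rpow_add_one hx2θ.ne'] at hmono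
    rw [div_mul_eq_mul_div, le_div_iff₀ hθ]
    nlinarith [rpow_nonneg hxθ.le (p + m), rpow_nonneg hx2θ.le (p + m)]
  have hexp : exp (-c * (x + θ) ^ σ)
      ≤ exp (c * (3 * M + θ) ^ σ) * exp (-c * (x + 2 * M + θ) ^ σ) := by
    rw [← exp_add, exp_le_exp]
    have h₁ := rpow_nonneg hxθ.le σ
    have h₂ : (x + 2 * M + θ) ^ σ ≤ (3 * M + θ) ^ σ := rpow_le_rpow hx2θ.le (by linarith) hσ.le
    nlinarith [mul_nonneg hc h₁, mul_le_mul_of_nonneg_left h₂ hc]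
  have hpow : (x / (x + θ)) ^ m
      ≤ ((2 * M + θ) / (2 * (M + θ))) ^ m * ((x + 2 * M) / (x + 2 * M + θ)) ^ m := by
    rw [← mul_pow]
    exact pow_le_pow_left₀ (by positivity) hratio m
  rw [latentIntegrand_eq_div_pow_mul hθ m p hx0,
    latentIntegrand_eq_div_pow_mul hθ m p (by positivity)]
  calc (x / (x + θ)) ^ m * (x + θ) ^ (p + m) * exp (-c * (x + θ) ^ σ)
      ≤ (((2 * M + θ) / (2 * (M + θ))) ^ m * ((x + 2 * M) / (x + 2 * M + θ)) ^ m)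
        * ((3 * M + θ) / θ * (x + 2 * M + θ) ^ (p + m))
        * (exp (c * (3 * M + θ) ^ σ) * exp (-c * (x + 2 * M + θ) ^ σ)) := by gcongr
    _ = _ := by ring

theorem latentIntegrand_sub_one_le (hθ : 0 < θ) (m : ℕ) (p : ℝ) {s u : ℝ} (hs : 0 ≤ s)
    (hu : s ≤ u) :
    latentIntegrand c θ σ m (p - 1) u ≤ latentIntegrand c θ σ m p u / (s + θ) := by
  have huθ : 0 < u + θ := by linarith
  have hdiv : latentIntegrand c θ σ m (p - 1) u = latentIntegrand c θ σ m p u / (u + θ) := by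
    simp only [latentIntegrand, rpow_sub_one huθ.ne']
    ring
  rw [hdiv]
  exact div_le_div_of_nonneg_left (latentIntegrand_nonneg hθ.le m p (hs.trans hu)) (by linarith)
    (by linarith)

end latentIntegrand

section latentIntegral

variable {a θ σ : ℝ}

theorem latentIntegral_nonneg (hθ : 0 ≤ θ) (m : ℕ) (p : ℝ) : 0 ≤ latentIntegral a θ σ m p :=
  setIntegral_nonneg measurableSet_Ioi fun _ hu => latentIntegrand_nonneg hθ m p (le_of_lt hu)

theorem latentIntegral_pos (ha : 0 < a) (hσ : 0 < σ) (hθ : 0 < θ) (m : ℕ) (p : ℝ) :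
    0 < latentIntegral a θ σ m p := by
  have hpos : ∀ u ∈ Ioi (0 : ℝ), 0 < latentIntegrand (a / σ) θ σ m p u := fun u (hu : 0 < u) => by
    have : 0 < u + θ := by linarith
    unfold latentIntegrand; positivity
  rw [latentIntegral, setIntegral_pos_iff_support_of_nonneg_ae
    ((ae_restrict_iff' measurableSet_Ioi).2 (.of_forall fun u hu => (hpos u hu).le))
    (integrableOn_latentIntegrand (by positivity) hσ hθ m p),
    inter_eq_right.2 fun u hu => Function.mem_support.2 (hpos u hu).ne']
  simp

theorem latentIntegral_ibp (ha : 0 < a) (hσ : 0 < σ) (hθ : 0 < θ) (m : ℕ) (p : ℝ) :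
    a * latentIntegral a θ σ (m + 1) (p + σ - 1)
      = (m + 1) * latentIntegral a θ σ m p + p * latentIntegral a θ σ (m + 1) (p - 1) := by
  have hc : 0 < a / σ := by positivity
  have hint := integrableOn_latentIntegrand hc hσ hθ
  have hderiv : ∀ u ∈ Ioi (0 : ℝ), HasDerivAt (latentIntegrand (a / σ) θ σ (m + 1) p)
      ((m + 1) * latentIntegrand (a / σ) θ σ m p u
        + p * latentIntegrand (a / σ) θ σ (m + 1) (p - 1) u
        - a / σ * σ * latentIntegrand (a / σ) θ σ (m + 1) (p + σ - 1) u) u :=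
    fun u (hu : 0 < u) => hasDerivAt_latentIntegrand m p (by linarith)
  have hint₁ : IntegrableOn (fun u => (m + 1) * latentIntegrand (a / σ) θ σ m p u
      + p * latentIntegrand (a / σ) θ σ (m + 1) (p - 1) u) (Ioi 0) :=
    ((hint m p).const_mul _).add ((hint (m + 1) (p - 1)).const_mul _)
  have hint₂ : IntegrableOn (fun u => a / σ * σ * latentIntegrand (a / σ) θ σ (m + 1) (p + σ - 1) u)
      (Ioi 0) := (hint (m + 1) (p + σ - 1)).const_mul _
  have hftc := integral_Ioi_of_hasDerivAt_of_tendsto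
    (hasDerivAt_latentIntegrand m p (by simpa using hθ)).continuousAt.continuousWithinAt hderiv
    (hint₁.sub hint₂) (tendsto_latentIntegrand_atTop hc hσ hθ (m + 1) p)
  rw [integral_sub hint₁ hint₂,
    integral_add ((hint m p).const_mul _) ((hint (m + 1) (p - 1)).const_mul _),
    integral_const_mul, integral_const_mul, integral_const_mul,
    div_mul_cancel₀ a hσ.ne'] at hftc
  have hzero : latentIntegrand (a / σ) θ σ (m + 1) p 0 = 0 := by simp [latentIntegrand]
  rw [hzero, sub_zero] at hftc
  unfold latentIntegral
  linarith

theorem latentIntegral_succ_add_mul (ha : 0 < a) (hσ : 0 < σ) (hθ : 0 < θ) (m : ℕ) (p : ℝ) :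
    latentIntegral a θ σ (m + 1) (p - 1) + θ * latentIntegral a θ σ m (p - 1)
      = latentIntegral a θ σ m p := by
  have hint := integrableOn_latentIntegrand (c := a / σ) (by positivity) hσ hθ
  rw [latentIntegral, latentIntegral, ← integral_const_mul,
    ← integral_add (hint (m + 1) (p - 1)) ((hint m (p - 1)).const_mul θ)]
  refine setIntegral_congr_fun measurableSet_Ioi fun u (hu : 0 < u) => ?_
  have huθ : 0 < u + θ := by linarith
  simp only [latentIntegrand, rpow_sub_one huθ.ne']
  field_simp
  ring

theorem setIntegral_Ioc_latentIntegrand_le (ha : 0 < a) (hσ : 0 < σ) (hθ : 0 < θ) {M : ℝ}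
    (hM : 0 < M) (m : ℕ) {p : ℝ} (hp : -1 ≤ p + m) :
    ∫ u in Ioc 0 M, latentIntegrand (a / σ) θ σ m p u
      ≤ (3 * M + θ) / θ * exp (a / σ * (3 * M + θ) ^ σ)
        * ((2 * M + θ) / (2 * (M + θ))) ^ m * latentIntegral a θ σ m p := by
  set C := (3 * M + θ) / θ * exp (a / σ * (3 * M + θ) ^ σ) * ((2 * M + θ) / (2 * (M + θ))) ^ m
  have hint := integrableOn_latentIntegrand (c := a / σ) (by positivity) hσ hθ m p
  have hnonneg : 0 ≤ᵐ[volume.restrict (Ioi 0)] latentIntegrand (a / σ) θ σ m p :=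
    (ae_restrict_iff' measurableSet_Ioi).2
      (.of_forall fun u (hu : 0 < u) => latentIntegrand_nonneg hθ.le m p hu.le)
  have hcont : ContinuousOn (latentIntegrand (a / σ) θ σ m p) (Ici 0) :=
    (continuousOn_latentIntegrand m p).mono fun u (hu : 0 ≤ u) => show -θ < u by linarith
  calc ∫ u in Ioc 0 M, latentIntegrand (a / σ) θ σ m p u
      = ∫ u in (0)..M, latentIntegrand (a / σ) θ σ m p u :=
        (intervalIntegral.integral_of_le hM.le).symm
    _ ≤ ∫ u in (0)..M, C * latentIntegrand (a / σ) θ σ m p (u + 2 * M) := by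
        refine intervalIntegral.integral_mono_on hM.le ?_ ?_
          fun x hx => latentIntegrand_le_shift (by positivity) hσ hθ hM m hp hx
        · exact (hcont.mono Icc_subset_Ici_self).intervalIntegrable_of_Icc hM.le
        · refine (continuousOn_const.mul (hcont.comp (by fun_prop) fun u hu => ?_)
            ).intervalIntegrable_of_Icc hM.le
          show 0 ≤ u + 2 * M
          linarith [hu.1]
    _ = C * ∫ u in (2 * M)..(3 * M), latentIntegrand (a / σ) θ σ m p u := by
        rw [intervalIntegral.integral_const_mul, intervalIntegral.integral_comp_add_right]
        ring_nf
    _ ≤ C * latentIntegral a θ σ m p := by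
        rw [intervalIntegral.integral_of_le (by linarith)]
        exact mul_le_mul_of_nonneg_left (setIntegral_mono_set hint hnonneg
          (Ioc_subset_Ioi_self.trans (Ioi_subset_Ioi (by positivity))).eventuallyLE) (by positivity)

theorem latentIntegral_sub_one_le (ha : 0 < a) (hσ : 0 < σ) (hθ : 0 < θ) {M : ℝ} (hM : 0 < M)
    (m : ℕ) {p : ℝ} (hp : -1 ≤ p + m) :
    latentIntegral a θ σ m (p - 1)
      ≤ ((3 * M + θ) / θ * exp (a / σ * (3 * M + θ) ^ σ)
          * ((2 * M + θ) / (2 * (M + θ))) ^ m / θ + 1 / (M + θ)) * latentIntegral a θ σ m p := by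
  have hint := integrableOn_latentIntegrand (c := a / σ) (by positivity) hσ hθ m
  have hnonneg : 0 ≤ᵐ[volume.restrict (Ioi 0)] latentIntegrand (a / σ) θ σ m p :=
    (ae_restrict_iff' measurableSet_Ioi).2
      (.of_forall fun u (hu : 0 < u) => latentIntegrand_nonneg hθ.le m p hu.le)
  have hnear : ∫ u in Ioc 0 M, latentIntegrand (a / σ) θ σ m (p - 1) u
      ≤ (∫ u in Ioc 0 M, latentIntegrand (a / σ) θ σ m p u) / θ := by
    rw [← integral_div]
    refine setIntegral_mono_on ((hint _).mono_set Ioc_subset_Ioi_self)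
      (((hint p).mono_set Ioc_subset_Ioi_self).div_const θ) measurableSet_Ioc fun u hu => ?_
    simpa using latentIntegrand_sub_one_le hθ m p le_rfl hu.1.le
  have hfar : ∫ u in Ioi M, latentIntegrand (a / σ) θ σ m (p - 1) u
      ≤ latentIntegral a θ σ m p / (M + θ) := by
    calc ∫ u in Ioi M, latentIntegrand (a / σ) θ σ m (p - 1) u
        ≤ ∫ u in Ioi M, latentIntegrand (a / σ) θ σ m p u / (M + θ) := by
          refine setIntegral_mono_on ((hint _).mono_set (Ioi_subset_Ioi hM.le))
            (((hint p).mono_set (Ioi_subset_Ioi hM.le)).div_const _) measurableSet_Ioi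
            fun u hu => latentIntegrand_sub_one_le hθ m p hM.le (le_of_lt hu)
      _ ≤ latentIntegral a θ σ m p / (M + θ) := by
          rw [integral_div]
          gcongr
          exact setIntegral_mono_set (hint p) hnonneg (Ioi_subset_Ioi hM.le).eventuallyLE
  have hsplit := setIntegral_union (Ioc_disjoint_Ioi_same (a := 0) (b := M)) measurableSet_Ioi
    ((hint (p - 1)).mono_set Ioc_subset_Ioi_self) ((hint (p - 1)).mono_set (Ioi_subset_Ioi hM.le))
  rw [Ioc_union_Ioi_eq_Ioi hM.le] at hsplit
  have hmass := setIntegral_Ioc_latentIntegrand_le ha hσ hθ hM m hp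
  calc latentIntegral a θ σ m (p - 1)
      ≤ (∫ u in Ioc 0 M, latentIntegrand (a / σ) θ σ m p u) / θ
        + latentIntegral a θ σ m p / (M + θ) := by
        rw [latentIntegral, hsplit]
        exact add_le_add hnear hfar
    _ ≤ _ := by
        rw [add_mul, div_mul_eq_mul_div, one_div_mul_eq_div]
        gcongr

theorem eventually_latentIntegral_sub_one_le (ha : 0 < a) (hσ : 0 < σ) (hθ : 0 < θ) {ε : ℝ}
    (hε : 0 < ε) : ∀ᶠ m : ℕ in atTop, ∀ p : ℝ, -1 ≤ p + m →
      latentIntegral a θ σ m (p - 1) ≤ ε * latentIntegral a θ σ m p := by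
  set M := 2 / ε
  have hM : 0 < M := by positivity
  have hfar : 1 / (M + θ) < ε / 2 := by
    calc 1 / (M + θ) < 1 / M := one_div_lt_one_div_of_lt hM (by linarith)
      _ = ε / 2 := by simp only [M]; field_simp
  have hρ : (2 * M + θ) / (2 * (M + θ)) < 1 := (div_lt_one (by positivity)).2 (by linarith)
  have hnear : Tendsto (fun m : ℕ => (3 * M + θ) / θ * exp (a / σ * (3 * M + θ) ^ σ)
      * ((2 * M + θ) / (2 * (M + θ))) ^ m / θ) atTop (𝓝 0) := by
    simpa using ((tendsto_pow_atTop_nhds_zero_of_lt_one (by positivity) hρ).const_mul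
      ((3 * M + θ) / θ * exp (a / σ * (3 * M + θ) ^ σ))).div_const θ
  filter_upwards [hnear.eventually (gt_mem_nhds (half_pos hε))] with m hm p hp
  calc latentIntegral a θ σ m (p - 1)
      ≤ ((3 * M + θ) / θ * exp (a / σ * (3 * M + θ) ^ σ)
          * ((2 * M + θ) / (2 * (M + θ))) ^ m / θ + 1 / (M + θ)) * latentIntegral a θ σ m p :=
        latentIntegral_sub_one_le ha hσ hθ hM m hp
    _ ≤ ε * latentIntegral a θ σ m p :=
        mul_le_mul_of_nonneg_right (by linarith) (latentIntegral_nonneg hθ.le m p)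

theorem mul_Nint_le (ha : 0 < a) (hσ : 0 < σ) (hθ : 0 < θ) {n : ℕ} (hn : 1 ≤ n) (k : ℕ) :
    a * Nint a θ σ n k
      ≤ k * σ * Dint a θ σ n k + n * θ * latentIntegral a θ σ (n - 1) (k * σ - n - 1) := by
  obtain ⟨m, rfl⟩ := Nat.exists_eq_add_of_le' hn
  set p : ℝ := k * σ - (m + 1) with hp
  have hD : Dint a θ σ (m + 1) k = latentIntegral a θ σ m p := by
    simp only [Dint, Nat.cast_succ, Nat.add_sub_cancel]
    rfl
  have hN : Nint a θ σ (m + 1) k = latentIntegral a θ σ (m + 1) (p + σ - 1) := by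
    have hexp : ((k : ℝ) + 1) * σ - (((m + 1 : ℕ) : ℝ) + 1) = p + σ - 1 := by push_cast; ring
    simp only [Nint, hexp]
    rfl
  have hK : latentIntegral a θ σ (m + 1 - 1) (k * σ - ((m + 1 : ℕ) : ℝ) - 1)
      = latentIntegral a θ σ m (p - 1) := by
    simp only [Nat.cast_succ, Nat.add_sub_cancel]
    rfl
  have hibp := latentIntegral_ibp ha hσ hθ m p
  have hsplit := latentIntegral_succ_add_mul ha hσ hθ m p
  have hKnonneg := mul_nonneg (mul_nonneg (mul_nonneg k.cast_nonneg hσ.le) hθ.le)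
    (latentIntegral_nonneg (a := a) (σ := σ) hθ.le m (p - 1))
  rw [hN, hD, hibp, hK, ← hsplit, hp]
  push_cast
  linear_combination hKnonneg

theorem div_mul_Nint_div_Dint_le (ha : 0 < a) (hσ : 0 < σ) (hθ : 0 < θ) {n : ℕ} (hn : 1 ≤ n)
    (k : ℕ) : a / n * (Nint a θ σ n k / Dint a θ σ n k)
      ≤ σ * (k / n) + θ * (latentIntegral a θ σ (n - 1) (k * σ - n - 1) / Dint a θ σ n k) := by
  have hD : 0 < Dint a θ σ n k := latentIntegral_pos ha hσ hθ (n - 1) (k * σ - n)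
  have hn' : (0 : ℝ) < n := by exact_mod_cast hn
  rw [div_mul_div_comm, div_le_iff₀ (by positivity)]
  calc a * Nint a θ σ n k
      ≤ k * σ * Dint a θ σ n k + n * θ * latentIntegral a θ σ (n - 1) (k * σ - n - 1) :=
        mul_Nint_le ha hσ hθ hn k
    _ = _ := by field_simp

theorem tendsto_latentIntegral_div_Dint (ha : 0 < a) (hσ : 0 < σ) (hθ : 0 < θ) (k : ℕ → ℕ) :
    Tendsto (fun n : ℕ => latentIntegral a θ σ (n - 1) (k n * σ - n - 1) / Dint a θ σ n (k n))
      atTop (𝓝 0) := by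
  refine tendsto_order.2 ⟨fun b hb => .of_forall fun n => hb.trans_le
    (div_nonneg (latentIntegral_nonneg hθ.le _ _) (latentIntegral_nonneg hθ.le _ _)),
    fun ε hε => ?_⟩
  filter_upwards [(tendsto_sub_atTop_nat 1).eventually
    (eventually_latentIntegral_sub_one_le ha hσ hθ (half_pos hε)), eventually_ge_atTop 1]
    with n hKD hn
  have hexp : -1 ≤ k n * σ - n + ((n - 1 : ℕ) : ℝ) := by
    rw [Nat.cast_sub hn, Nat.cast_one]
    nlinarith [(k n).cast_nonneg (α := ℝ)]
  refine lt_of_le_of_lt (div_le_of_le_mul₀ (latentIntegral_nonneg hθ.le _ _) (half_pos hε).le ?_)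
    (half_lt_self hε)
  exact hKD _ hexp

end latentIntegral

theorem stmt_9_general (a θ σ : ℝ) (ha : 0 < a) (hθ : 0 < θ) (hσ : σ ∈ Set.Ioo (0:ℝ) 1)
    (k : ℕ → ℕ)
    (hk0 : Tendsto (fun n : ℕ => (k n : ℝ) / n) atTop (nhds 0)) :
    Tendsto (fun n : ℕ => (a / n) * (Nint a θ σ n (k n) / Dint a θ σ n (k n)))
      atTop (nhds 0) := by
  obtain ⟨hσ0, -⟩ := hσ
  have hmajorant := (hk0.const_mul σ).add
    ((tendsto_latentIntegral_div_Dint ha hσ0 hθ k).const_mul θ)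
  rw [mul_zero, mul_zero, add_zero] at hmajorant
  refine squeeze_zero' (.of_forall fun n => ?_) ?_ hmajorant
  · exact mul_nonneg (by positivity)
      (div_nonneg (latentIntegral_nonneg hθ.le _ _) (latentIntegral_nonneg hθ.le _ _))
  · filter_upwards [eventually_ge_atTop 1] with n hn
      using div_mul_Nint_div_Dint_le ha hσ0 hθ hn (k n)

/-- If `1 ≤ k_n ≤ n` and `k_n/n → 0`, then `(a/n)·N(n,k_n)/D(n,k_n) → 0`. -/
theorem stmt_9 (a θ σ : ℝ) (ha : 0 < a) (hθ : 0 < θ) (hσ : σ ∈ Set.Ioo (0:ℝ) 1)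
    (k : ℕ → ℕ) (hk : ∀ n : ℕ, 1 ≤ n → 1 ≤ k n ∧ k n ≤ n)
    (hk0 : Tendsto (fun n : ℕ => (k n : ℝ) / n) atTop (nhds 0)) :
    Tendsto (fun n : ℕ => (a / n) * (Nint a θ σ n (k n) / Dint a θ σ n (k n)))
      atTop (nhds 0) :=
  stmt_9_general a θ σ ha hθ hσ k hk0
end

section
/- Fix a > 0, θ > 0, σ ∈ (0,1) and set Φ(u) = exp(−(a/σ)(u+θ)^σ) for u > 0. For integers n ≥ 1, k ≥ 0 define D(n,k) = ∫_0^∞ u^{n−1}(u+θ)^{kσ−n} Φ(u) du and N(n,k) = ∫_0^∞ u^{n}(u+θ)^{(k+1)σ−(n+1)} Φ(u) du (finite, positive Lebesgue integrals). Then (a/n) · N(n,n)/D(n,n) → σ as n → ∞. -/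
/-!
Integrating the derivative of `u ^ n (u + θ) ^ (n (σ - 1)) Φ(u)` over `(0, ∞)` and writing
`u = (u + θ) - θ` gives `a N(n,n) = n σ D(n,n) + n (1 - σ) θ E_n`, where `E_n` is the integral
defining `D(n,n)` with one more factor `(u + θ)⁻¹`. So
`(a/n) N(n,n)/D(n,n) = σ + (1 - σ) θ E_n / D(n,n)`, and it remains to show `θ E_n / D(n,n) → 0`.
Split `E_n` at `R`: beyond `R` it is at most `D(n,n) / (R + θ)`; on `(0, R]` it is, compared with
the mass that `D(n,n)` puts on `[A, A + 1]`, of order `rⁿ` with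
`r = R θ^(σ-1) / (A (A + 1 + θ)^(σ-1))`, and `r < 1` once `A` is large because
`A (A + 1 + θ)^(σ-1) → ∞` for `σ > 0`.
-/

open MeasureTheory Real Set Filter

open Topology

noncomputable def nggKernel (b θ σ : ℝ) (p : ℕ) (q u : ℝ) : ℝ :=
  u ^ p * (u + θ) ^ q * exp (-b * (u + θ) ^ σ)

noncomputable def nggIntegral (b θ σ : ℝ) (p : ℕ) (q : ℝ) : ℝ :=
  ∫ u in Ioi (0:ℝ), nggKernel b θ σ p q u

section nggKernel

variable {b θ σ q u : ℝ}

lemma nggKernel_nonneg (hθ : 0 ≤ θ) (p : ℕ) (q : ℝ) (hu : 0 ≤ u) :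
    0 ≤ nggKernel b θ σ p q u := by
  unfold nggKernel; positivity

lemma continuousOn_nggKernel (hθ : 0 < θ) (p : ℕ) (q : ℝ) :
    ContinuousOn (nggKernel b θ σ p q) (Ici 0) := by
  have hpos : ∀ u ∈ Ici (0:ℝ), u + θ ≠ 0 := fun u hu => by
    have : (0:ℝ) ≤ u := hu; positivity
  unfold nggKernel
  exact ((continuousOn_pow p).mul ((continuousOn_id.add continuousOn_const).rpow_const
    fun u hu => Or.inl (hpos u hu))).mul (((continuousOn_id.add continuousOn_const).rpow_const
    fun u hu => Or.inl (hpos u hu)).const_smul (-b)).rexp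

lemma nggKernel_le_rpow_mul_exp (hb : 0 ≤ b) (hθ : 0 < θ) (hσ : 0 ≤ σ) (p : ℕ) (hq : q ≤ 0)
    (hu : 0 ≤ u) :
    nggKernel b θ σ p q u ≤ θ ^ q * (u ^ (p:ℝ) * exp (-b * u ^ σ)) := by
  have hθq : (u + θ) ^ q ≤ θ ^ q := rpow_le_rpow_of_nonpos hθ (by linarith) hq
  have hexp : exp (-b * (u + θ) ^ σ) ≤ exp (-b * u ^ σ) := by
    have : u ^ σ ≤ (u + θ) ^ σ := rpow_le_rpow hu (by linarith) hσ
    exact exp_le_exp.mpr (by nlinarith)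
  rw [rpow_natCast]
  calc nggKernel b θ σ p q u ≤ u ^ p * θ ^ q * exp (-b * u ^ σ) := by
        unfold nggKernel; gcongr
    _ = _ := by ring

lemma integrableOn_nggKernel (hb : 0 < b) (hθ : 0 < θ) (hσ : 0 < σ) (p : ℕ) (hq : q ≤ 0) :
    IntegrableOn (nggKernel b θ σ p q) (Ioi 0) := by
  have hdom := (integrableOn_rpow_mul_exp_neg_mul_rpow (s := p)
    (neg_one_lt_zero.trans_le p.cast_nonneg) hσ hb).const_mul (θ ^ q)
  refine Integrable.mono' hdom (((continuousOn_nggKernel hθ p q).mono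
    Ioi_subset_Ici_self).aestronglyMeasurable measurableSet_Ioi) ?_
  filter_upwards [ae_restrict_mem measurableSet_Ioi] with u hu
  rw [norm_of_nonneg (nggKernel_nonneg hθ.le p q (le_of_lt hu))]
  exact nggKernel_le_rpow_mul_exp hb.le hθ hσ.le p hq (le_of_lt hu)

lemma nggKernel_sub_one (hu : 0 < u + θ) (p : ℕ) (q : ℝ) :
    nggKernel b θ σ p (q - 1) u = nggKernel b θ σ p q u / (u + θ) := by
  unfold nggKernel
  rw [rpow_sub_one hu.ne']
  ring

lemma nggKernel_sub_nggKernel_succ (hu : 0 < u + θ) (p : ℕ) (q : ℝ) :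
    nggKernel b θ σ p q u - nggKernel b θ σ (p + 1) (q - 1) u
      = θ * nggKernel b θ σ p (q - 1) u := by
  rw [nggKernel_sub_one hu, nggKernel_sub_one hu]
  unfold nggKernel
  field_simp
  ring

lemma hasDerivAt_nggKernel_succ (hu : 0 < u + θ) (p : ℕ) (q : ℝ) :
    HasDerivAt (nggKernel b θ σ (p + 1) q)
      ((p + 1) * nggKernel b θ σ p q u + q * nggKernel b θ σ (p + 1) (q - 1) u
        - b * σ * nggKernel b θ σ (p + 1) (q + σ - 1) u) u := by
  have hshift : HasDerivAt (fun u : ℝ => u + θ) 1 u := (hasDerivAt_id u).add_const θ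
  have hpow (r : ℝ) : HasDerivAt (fun u : ℝ => (u + θ) ^ r) (r * (u + θ) ^ (r - 1)) u := by
    have h := (hasDerivAt_rpow_const (p := r) (Or.inl hu.ne')).comp u hshift
    rwa [mul_one] at h
  have h := ((hasDerivAt_pow (p + 1) u).mul (hpow q)).mul ((hpow σ).const_mul (-b)).exp
  refine h.congr_deriv ?_
  unfold nggKernel
  simp only [rpow_sub_one hu.ne', rpow_add hu, Pi.mul_apply, Nat.add_sub_cancel]
  push_cast
  field_simp
  ring

lemma tendsto_nggKernel_atTop (hb : 0 < b) (hθ : 0 ≤ θ) (hσ : 0 < σ) (p : ℕ) (hq : q ≤ 0) :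
    Tendsto (nggKernel b θ σ p q) atTop (𝓝 0) := by
  have hshift : Tendsto (fun u : ℝ => (u + θ) ^ σ) atTop atTop :=
    (tendsto_rpow_atTop hσ).comp (tendsto_atTop_add_const_right atTop θ tendsto_id)
  refine squeeze_zero' ?_ ?_
    ((tendsto_rpow_mul_exp_neg_mul_atTop_nhds_zero (p / σ) b hb).comp hshift)
  · filter_upwards [eventually_ge_atTop 0] with u hu
    exact nggKernel_nonneg hθ p q hu
  · filter_upwards [eventually_ge_atTop 1] with u hu
    have huθ : 1 ≤ u + θ := by linarith
    have hpow : ((u + θ) ^ σ) ^ (p / σ) = (u + θ) ^ p := by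
      rw [← rpow_mul (by linarith), mul_div_cancel₀ _ hσ.ne', rpow_natCast]
    simp only [Function.comp_apply, hpow, nggKernel]
    gcongr
    calc u ^ p * (u + θ) ^ q ≤ (u + θ) ^ p * 1 := by
          gcongr
          · linarith
          · exact rpow_le_one_of_one_le_of_nonpos huθ hq
      _ = (u + θ) ^ p := mul_one _

end nggKernel

section nggIntegral

variable {b θ σ q : ℝ}

lemma nggIntegral_sub_nggIntegral_succ (hb : 0 < b) (hθ : 0 < θ) (hσ : 0 < σ) (p : ℕ)
    (hq : q ≤ 0) :
    nggIntegral b θ σ p q - nggIntegral b θ σ (p + 1) (q - 1)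
      = θ * nggIntegral b θ σ p (q - 1) := by
  unfold nggIntegral
  rw [← integral_sub (integrableOn_nggKernel hb hθ hσ p hq)
    (integrableOn_nggKernel hb hθ hσ (p + 1) (by linarith)), ← integral_const_mul]
  refine setIntegral_congr_fun measurableSet_Ioi fun u hu => ?_
  exact nggKernel_sub_nggKernel_succ (by linarith [mem_Ioi.mp hu]) p q

lemma nggIntegral_by_parts (hb : 0 < b) (hθ : 0 < θ) (hσ : 0 < σ) (hσ1 : σ ≤ 1) (p : ℕ)
    (hq : q ≤ 0) :
    b * σ * nggIntegral b θ σ (p + 1) (q + σ - 1)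
      = (p + 1) * nggIntegral b θ σ p q + q * nggIntegral b θ σ (p + 1) (q - 1) := by
  have h₁ := integrableOn_nggKernel hb hθ hσ p hq
  have h₂ := integrableOn_nggKernel hb hθ hσ (p + 1) (q := q - 1) (by linarith)
  have h₃ := integrableOn_nggKernel hb hθ hσ (p + 1) (q := q + σ - 1) (by linarith)
  have hFTC := integral_Ioi_of_hasDerivAt_of_tendsto
    ((continuousOn_nggKernel hθ (p + 1) q).continuousWithinAt (mem_Ici.2 le_rfl))
    (fun u hu => hasDerivAt_nggKernel_succ (by linarith [mem_Ioi.mp hu]) p q)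
    (((h₁.const_mul _).add (h₂.const_mul _)).sub (h₃.const_mul _))
    (tendsto_nggKernel_atTop hb hθ.le hσ (p + 1) hq)
  have h₁₂ : IntegrableOn (fun u => (p + 1) * nggKernel b θ σ p q u
      + q * nggKernel b θ σ (p + 1) (q - 1) u) (Ioi 0) := (h₁.const_mul _).add (h₂.const_mul _)
  rw [integral_sub h₁₂ (h₃.const_mul _), integral_add (h₁.const_mul _) (h₂.const_mul _),
    integral_const_mul, integral_const_mul, integral_const_mul] at hFTC
  have hF0 : nggKernel b θ σ (p + 1) q 0 = 0 := by simp [nggKernel]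
  rw [hF0] at hFTC
  unfold nggIntegral
  linear_combination -hFTC

lemma mul_nggIntegral_succ (hb : 0 < b) (hθ : 0 < θ) (hσ : 0 < σ) (hσ1 : σ ≤ 1) (p : ℕ)
    (hq : q ≤ 0) :
    b * σ * nggIntegral b θ σ (p + 1) (q + σ - 1)
      = (p + 1 + q) * nggIntegral b θ σ p q - q * θ * nggIntegral b θ σ p (q - 1) := by
  linear_combination nggIntegral_by_parts hb hθ hσ hσ1 p hq
    - q * nggIntegral_sub_nggIntegral_succ hb hθ hσ p hq

end nggIntegral

section estimates

variable {b θ σ q : ℝ}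

lemma le_nggIntegral (hb : 0 < b) (hθ : 0 < θ) (hσ : 0 < σ) (p : ℕ) (hq : q ≤ 0) {A : ℝ}
    (hA : 0 ≤ A) :
    A ^ p * (A + 1 + θ) ^ q * exp (-b * (A + 1 + θ) ^ σ) ≤ nggIntegral b θ σ p q := by
  have hsub : Ioc A (A + 1) ⊆ Ioi 0 := fun u hu => lt_of_le_of_lt hA hu.1
  have hint := integrableOn_nggKernel hb hθ hσ p hq
  have hbound : ∀ u ∈ Ioc A (A + 1),
      A ^ p * (A + 1 + θ) ^ q * exp (-b * (A + 1 + θ) ^ σ) ≤ nggKernel b θ σ p q u := by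
    rintro u ⟨hAu, huA⟩
    have hqu : (A + 1 + θ) ^ q ≤ (u + θ) ^ q :=
      rpow_le_rpow_of_nonpos (by linarith) (by linarith) hq
    have hσu : (u + θ) ^ σ ≤ (A + 1 + θ) ^ σ := rpow_le_rpow (by linarith) (by linarith) hσ.le
    have hexp : exp (-b * (A + 1 + θ) ^ σ) ≤ exp (-b * (u + θ) ^ σ) := exp_le_exp.mpr (by nlinarith)
    have hu : 0 ≤ u := by linarith
    exact mul_le_mul (mul_le_mul (pow_le_pow_left₀ hA hAu.le p) hqu (by positivity) (by positivity))
      hexp (exp_pos _).le (mul_nonneg (by positivity) (rpow_nonneg (by linarith) q))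
  calc A ^ p * (A + 1 + θ) ^ q * exp (-b * (A + 1 + θ) ^ σ)
      = A ^ p * (A + 1 + θ) ^ q * exp (-b * (A + 1 + θ) ^ σ) * volume.real (Ioc A (A + 1)) := by
        simp [Real.volume_real_Ioc]
    _ ≤ ∫ u in Ioc A (A + 1), nggKernel b θ σ p q u :=
        setIntegral_ge_of_const_le_real measurableSet_Ioc measure_Ioc_lt_top.ne hbound
          (hint.mono_set hsub)
    _ ≤ nggIntegral b θ σ p q :=
        setIntegral_mono_set hint ((ae_restrict_mem measurableSet_Ioi).mono fun u hu =>
          nggKernel_nonneg hθ.le p q (le_of_lt hu)) hsub.eventuallyLE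

lemma nggIntegral_pos (hb : 0 < b) (hθ : 0 < θ) (hσ : 0 < σ) (p : ℕ) (hq : q ≤ 0) :
    0 < nggIntegral b θ σ p q :=
  lt_of_lt_of_le (by positivity) (le_nggIntegral hb hθ hσ p hq zero_le_one)

lemma setIntegral_Ioc_nggKernel_le (hb : 0 ≤ b) (hθ : 0 < θ) (hσ : 0 ≤ σ) (p : ℕ) (hq : q ≤ 0)
    {R : ℝ} (hR : 0 ≤ R) :
    ∫ u in Ioc 0 R, nggKernel b θ σ p q u ≤ θ ^ q * R ^ (p + 1) := by
  have hbound : ∀ u ∈ Ioc 0 R, ‖nggKernel b θ σ p q u‖ ≤ θ ^ q * R ^ p := by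
    rintro u ⟨hu, huR⟩
    rw [norm_of_nonneg (nggKernel_nonneg hθ.le p q hu.le)]
    refine (nggKernel_le_rpow_mul_exp hb hθ hσ p hq hu.le).trans ?_
    rw [rpow_natCast]
    gcongr
    calc u ^ p * exp (-b * u ^ σ) ≤ R ^ p * 1 := by
          gcongr
          exact exp_le_one_iff.mpr (by have := rpow_nonneg hu.le σ; nlinarith)
      _ = R ^ p := mul_one _
  calc ∫ u in Ioc 0 R, nggKernel b θ σ p q u ≤ ‖∫ u in Ioc 0 R, nggKernel b θ σ p q u‖ :=
        le_abs_self _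
    _ ≤ θ ^ q * R ^ p * volume.real (Ioc 0 R) :=
        norm_setIntegral_le_of_norm_le_const measure_Ioc_lt_top hbound
    _ = θ ^ q * R ^ (p + 1) := by
        rw [Real.volume_real_Ioc_of_le hR, sub_zero, pow_succ]
        ring

lemma setIntegral_Ioi_nggKernel_sub_one_le (hb : 0 < b) (hθ : 0 < θ) (hσ : 0 < σ) (p : ℕ)
    (hq : q ≤ 0) {R : ℝ} (hR : 0 ≤ R) :
    ∫ u in Ioi R, nggKernel b θ σ p (q - 1) u ≤ (R + θ)⁻¹ * nggIntegral b θ σ p q := by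
  have hsub : Ioi R ⊆ Ioi 0 := Ioi_subset_Ioi hR
  have hint := integrableOn_nggKernel hb hθ hσ p hq
  calc ∫ u in Ioi R, nggKernel b θ σ p (q - 1) u
      ≤ ∫ u in Ioi R, (R + θ)⁻¹ * nggKernel b θ σ p q u := by
        refine setIntegral_mono_on ((integrableOn_nggKernel hb hθ hσ p (by linarith)).mono_set hsub)
          ((hint.mono_set hsub).const_mul _) measurableSet_Ioi fun u hu => ?_
        have hRu : R < u := hu
        rw [nggKernel_sub_one (by linarith) p q, div_eq_inv_mul]
        gcongr
        exact nggKernel_nonneg hθ.le p q (by linarith)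
    _ ≤ (R + θ)⁻¹ * nggIntegral b θ σ p q := by
        rw [integral_const_mul]
        gcongr
        exact setIntegral_mono_set hint ((ae_restrict_mem measurableSet_Ioi).mono fun u hu =>
          nggKernel_nonneg hθ.le p q (le_of_lt hu)) hsub.eventuallyLE

lemma mul_nggIntegral_sub_one_le (hb : 0 < b) (hθ : 0 < θ) (hσ : 0 < σ) (p : ℕ) (hq : q ≤ 0)
    {R : ℝ} (hR : 0 ≤ R) :
    θ * nggIntegral b θ σ p (q - 1)
      ≤ θ ^ q * R ^ (p + 1) + θ / (R + θ) * nggIntegral b θ σ p q := by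
  have hint := integrableOn_nggKernel hb hθ hσ p (q := q - 1) (by linarith)
  have hsplit : nggIntegral b θ σ p (q - 1)
      = (∫ u in Ioc 0 R, nggKernel b θ σ p (q - 1) u)
        + ∫ u in Ioi R, nggKernel b θ σ p (q - 1) u := by
    rw [nggIntegral, ← Ioc_union_Ioi_eq_Ioi hR]
    exact setIntegral_union (Ioc_disjoint_Ioi le_rfl) measurableSet_Ioi
      (hint.mono_set Ioc_subset_Ioi_self) (hint.mono_set (Ioi_subset_Ioi hR))
  have hhead := setIntegral_Ioc_nggKernel_le hb.le hθ hσ.le p (q := q - 1) (by linarith) hR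
  have htail := setIntegral_Ioi_nggKernel_sub_one_le hb hθ hσ p hq hR
  have hθq : θ * θ ^ (q - 1) = θ ^ q := by rw [rpow_sub_one hθ.ne']; field_simp
  calc θ * nggIntegral b θ σ p (q - 1)
      ≤ θ * (θ ^ (q - 1) * R ^ (p + 1) + (R + θ)⁻¹ * nggIntegral b θ σ p q) := by
        rw [hsplit]; gcongr
    _ = θ ^ q * R ^ (p + 1) + θ / (R + θ) * nggIntegral b θ σ p q := by
        rw [← hθq]; ring

end estimates

lemma tendsto_mul_add_rpow_atTop {θ σ : ℝ} (hθ : 0 ≤ θ) (hσ : 0 < σ) (hσ1 : σ ≤ 1) :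
    Tendsto (fun A : ℝ => A * (A + 1 + θ) ^ (σ - 1)) atTop atTop := by
  have hshift : Tendsto (fun A : ℝ => A + 1 + θ) atTop atTop :=
    tendsto_atTop_add_const_right _ θ (tendsto_atTop_add_const_right _ 1 tendsto_id)
  refine tendsto_atTop_mono' _ ?_
    (tendsto_atTop_add_const_right _ (-(1 + θ) ^ σ) ((tendsto_rpow_atTop hσ).comp hshift))
  filter_upwards [eventually_ge_atTop 0] with A hA
  have hsplit : (A + 1 + θ) ^ σ = (A + 1 + θ) * (A + 1 + θ) ^ (σ - 1) := by
    rw [rpow_sub_one (by linarith)]; field_simp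
  have hdecr : (A + 1 + θ) ^ (σ - 1) ≤ (1 + θ) ^ (σ - 1) :=
    rpow_le_rpow_of_nonpos (by linarith) (by linarith) (by linarith)
  have h1θ : (1 + θ) ^ σ = (1 + θ) * (1 + θ) ^ (σ - 1) := by
    rw [rpow_sub_one (by linarith)]; field_simp
  simp only [Function.comp_apply, hsplit, h1θ]
  nlinarith [rpow_nonneg (by linarith : (0:ℝ) ≤ A + 1 + θ) (σ - 1)]

lemma mul_nggIntegral_sub_one_div_le {b θ σ q : ℝ} (hb : 0 < b) (hθ : 0 < θ) (hσ : 0 < σ)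
    (p : ℕ) (hq : q ≤ 0) {R A : ℝ} (hR : 0 ≤ R) (hA : 0 < A) :
    θ * nggIntegral b θ σ p (q - 1) / nggIntegral b θ σ p q
      ≤ θ ^ q * R ^ (p + 1) / (A ^ p * (A + 1 + θ) ^ q * exp (-b * (A + 1 + θ) ^ σ))
        + θ / (R + θ) := by
  set L := A ^ p * (A + 1 + θ) ^ q * exp (-b * (A + 1 + θ) ^ σ)
  have hL : 0 < L := by have := rpow_pos_of_pos (by linarith : 0 < A + 1 + θ) q; positivity
  rw [div_le_iff₀ (nggIntegral_pos hb hθ hσ p hq)]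
  calc θ * nggIntegral b θ σ p (q - 1)
      ≤ θ ^ q * R ^ (p + 1) / L * L + θ / (R + θ) * nggIntegral b θ σ p q := by
        rw [div_mul_cancel₀ _ hL.ne']
        exact mul_nggIntegral_sub_one_le hb hθ hσ p hq hR
    _ ≤ θ ^ q * R ^ (p + 1) / L * nggIntegral b θ σ p q
          + θ / (R + θ) * nggIntegral b θ σ p q := by
        gcongr
        exact le_nggIntegral hb hθ hσ p hq hA.le
    _ = _ := by ring

theorem tendsto_mul_nggIntegral_sub_one_div {b θ σ : ℝ} (hb : 0 < b) (hθ : 0 < θ) (hσ : 0 < σ)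
    (hσ1 : σ ≤ 1) :
    Tendsto (fun m : ℕ => θ * nggIntegral b θ σ m ((m + 1) * (σ - 1) - 1)
      / nggIntegral b θ σ m ((m + 1) * (σ - 1))) atTop (𝓝 0) := by
  rw [NormedAddGroup.tendsto_nhds_zero]
  intro ε hε
  obtain ⟨R, hRε, hR⟩ : ∃ R : ℝ, θ / (R + θ) < ε / 2 ∧ 0 < R :=
    (((tendsto_const_nhds.div_atTop (tendsto_atTop_add_const_right _ θ tendsto_id)).eventually
      (gt_mem_nhds (half_pos hε))).and (eventually_gt_atTop 0)).exists
  obtain ⟨A, hA, hRA⟩ : ∃ A : ℝ, 0 < A ∧ R * θ ^ (σ - 1) < A * (A + 1 + θ) ^ (σ - 1) :=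
    ((eventually_gt_atTop 0).and
      ((tendsto_mul_add_rpow_atTop hθ.le hσ hσ1).eventually_gt_atTop _)).exists
  set x := θ ^ (σ - 1)
  set y := (A + 1 + θ) ^ (σ - 1)
  set K := exp (-b * (A + 1 + θ) ^ σ)
  set r := R * x / (A * y)
  have hy : 0 < y := rpow_pos_of_pos (by linarith) _
  have hr : r < 1 := (div_lt_one (by positivity)).mpr hRA
  have hgeo : Tendsto (fun m : ℕ => r ^ m * (R * x / (y * K))) atTop (𝓝 0) := by
    simpa using (tendsto_pow_atTop_nhds_zero_of_lt_one (by positivity) hr).mul_const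
      (R * x / (y * K))
  filter_upwards [hgeo.eventually (gt_mem_nhds (half_pos hε))] with m hm
  set q : ℝ := (m + 1) * (σ - 1)
  have hq : q ≤ 0 := mul_nonpos_of_nonneg_of_nonpos (by positivity) (by linarith)
  have hpow : ∀ z : ℝ, 0 ≤ z → z ^ q = (z ^ (σ - 1)) ^ (m + 1) := fun z hz => by
    rw [← rpow_mul_natCast hz]; congr 1; simp only [q]; push_cast; ring
  have hgeo_eq : θ ^ q * R ^ (m + 1) / (A ^ m * (A + 1 + θ) ^ q * K)
      = r ^ m * (R * x / (y * K)) := by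
    have hK : 0 < K := exp_pos _
    rw [hpow θ hθ.le, hpow _ (by linarith)]
    simp only [r]
    rw [div_pow, mul_pow]
    field_simp
    ring
  have hbound := mul_nggIntegral_sub_one_div_le hb hθ hσ m hq hR.le hA
  rw [hgeo_eq] at hbound
  have hE := nggIntegral_pos hb hθ hσ m (q := q - 1) (by linarith)
  have hD := nggIntegral_pos hb hθ hσ m hq
  rw [norm_of_nonneg (by positivity)]
  linarith

lemma div_mul_nggIntegral_div_eq {b θ σ : ℝ} (hb : 0 < b) (hθ : 0 < θ) (hσ : 0 < σ)
    (hσ1 : σ ≤ 1) (m : ℕ) :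
    b * σ / (m + 1) * (nggIntegral b θ σ (m + 1) ((m + 1) * (σ - 1) + σ - 1)
      / nggIntegral b θ σ m ((m + 1) * (σ - 1)))
    = σ + (1 - σ) * (θ * nggIntegral b θ σ m ((m + 1) * (σ - 1) - 1)
      / nggIntegral b θ σ m ((m + 1) * (σ - 1))) := by
  have hq : ((m : ℝ) + 1) * (σ - 1) ≤ 0 :=
    mul_nonpos_of_nonneg_of_nonpos (by positivity) (by linarith)
  have hD := nggIntegral_pos hb hθ hσ m hq
  have h := mul_nggIntegral_succ hb hθ hσ hσ1 m hq
  field_simp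
  linear_combination h

lemma Dint_succ_self (a θ σ : ℝ) (m : ℕ) :
    Dint a θ σ (m + 1) (m + 1) = nggIntegral (a / σ) θ σ m ((m + 1) * (σ - 1)) := by
  have hexp : ((m + 1 : ℕ) : ℝ) * σ - ((m + 1 : ℕ) : ℝ) = (m + 1) * (σ - 1) := by push_cast; ring
  simp only [Dint, nggIntegral, nggKernel, Nat.add_sub_cancel, hexp]

lemma Nint_succ_self (a θ σ : ℝ) (m : ℕ) :
    Nint a θ σ (m + 1) (m + 1)
      = nggIntegral (a / σ) θ σ (m + 1) ((m + 1) * (σ - 1) + σ - 1) := by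
  have hexp : (((m + 1 : ℕ) : ℝ) + 1) * σ - (((m + 1 : ℕ) : ℝ) + 1)
      = (m + 1) * (σ - 1) + σ - 1 := by
    push_cast; ring
  simp only [Nint, nggIntegral, nggKernel, hexp]

/-- `(a/n)·N(n,n)/D(n,n) → σ` as `n → ∞`. -/
theorem stmt_10 (a θ σ : ℝ) (ha : 0 < a) (hθ : 0 < θ) (hσ : σ ∈ Set.Ioo (0:ℝ) 1) :
    Tendsto (fun n : ℕ => (a / n) * (Nint a θ σ n n / Dint a θ σ n n))
      atTop (nhds σ) := by
  obtain ⟨hσ0, hσ1⟩ := hσ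
  have hb : 0 < a / σ := div_pos ha hσ0
  have hratio : ∀ m : ℕ,
      a / ((m + 1 : ℕ) : ℝ) * (Nint a θ σ (m + 1) (m + 1) / Dint a θ σ (m + 1) (m + 1))
        = σ + (1 - σ) * (θ * nggIntegral (a / σ) θ σ m ((m + 1) * (σ - 1) - 1)
          / nggIntegral (a / σ) θ σ m ((m + 1) * (σ - 1))) := fun m => by
    rw [Dint_succ_self, Nint_succ_self, ← div_mul_nggIntegral_div_eq hb hθ hσ0 hσ1.le,
      div_mul_cancel₀ a hσ0.ne', Nat.cast_succ]
  refine (tendsto_add_atTop_iff_nat 1).mp ?_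
  simp only [hratio]
  simpa using
    ((tendsto_mul_nggIntegral_sub_one_div hb hθ hσ0 hσ1.le).const_mul (1 - σ)).const_add σ
end
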